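/- arXiv:2506.02530 — 6 statements merged into one kernel-verified Lean document; each statement's English description precedes it below -/
import Mathlib

section
/- Let A be the adjacency matrix of a connected k-regular graph Γ on n vertices that is not complete, with distinct eigenvalues, and for each distinct eigenvalue θ let E_θ be the orthogonal projection onto the θ-eigenspace. Then for every vertex x, E_k e_x = (1/n)𝟙 ≠ 0, and there are at least 3 distinct eigenvalues θ with E_θ e_x ≠ 0. -/
/-!
The projection of `e_x` onto the `k`-eigenspace is `𝟙/n`, because `k`-eigenvectors of a connected
`k`-regular graph are constant. If the eigenvalue support of `e_x` were contained in `{k, θ}`, then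
`(A - k)(A - θ) e_x = 0`, so `(A - θ) e_x` would be a `k`-eigenvector, hence constant. But it
takes the value `1` at a neighbour of `x` and `0` at a non-neighbour `z ≠ x`, which exists since
the graph is regular and not complete.
-/

open Matrix Polynomial

namespace Matrix

variable {n : Type*} [Fintype n]

/-- The eigenvalues `θ` with `E_θ w ≠ 0`; no projections are needed since `E_θ w ≠ 0` iff `w` is
not orthogonal to the `θ`-eigenspace. -/
def eigenvalueSupport (A : Matrix n n ℝ) (w : n → ℝ) : Set ℝ :=
  {θ | ∃ v, A *ᵥ v = θ • v ∧ v ⬝ᵥ w ≠ 0}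

lemma aeval_mulVec_of_mulVec_eq_smul {R : Type*} [CommRing R] [DecidableEq n]
    {A : Matrix n n R} {v : n → R} {μ : R} (h : A *ᵥ v = μ • v) (p : R[X]) :
    aeval A p *ᵥ v = p.eval μ • v := by
  have h' : toLinAlgEquiv' A v = μ • v := h
  rw [← toLinAlgEquiv'_apply, ← aeval_algHom_apply]
  exact Module.End.aeval_apply_of_mem_apply_eq_smul h'

namespace IsHermitian

variable [DecidableEq n] {A : Matrix n n ℝ}

lemma sum_dotProduct_smul_eigenvectorBasis (hA : A.IsHermitian) (w : n → ℝ) :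
    ∑ i, (hA.eigenvectorBasis i ⬝ᵥ w) • ⇑(hA.eigenvectorBasis i) = w := by
  have h := congrArg WithLp.ofLp (hA.eigenvectorBasis.sum_repr' (WithLp.toLp 2 w))
  simpa [EuclideanSpace.inner_eq_star_dotProduct, dotProduct_comm] using h

lemma aeval_mulVec_eq_zero (hA : A.IsHermitian) {w : n → ℝ} {p : ℝ[X]}
    (hp : ∀ θ ∈ eigenvalueSupport A w, p.eval θ = 0) : aeval A p *ᵥ w = 0 := by
  rw [← hA.sum_dotProduct_smul_eigenvectorBasis w, mulVec_sum]
  refine Finset.sum_eq_zero fun i _ => ?_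
  rw [mulVec_smul, aeval_mulVec_of_mulVec_eq_smul (hA.mulVec_eigenvectorBasis i)]
  by_cases hi : hA.eigenvectorBasis i ⬝ᵥ w = 0
  · rw [hi, zero_smul]
  · rw [hp _ ⟨_, hA.mulVec_eigenvectorBasis i, hi⟩, zero_smul, smul_zero]

end IsHermitian

end Matrix

namespace SimpleGraph

variable {V : Type*} [Fintype V] {G : SimpleGraph V} [DecidableRel G.Adj] {k : ℕ}

lemma IsRegularOfDegree.adjMatrix_mulVec_eq_smul_iff [DecidableEq V]
    (hreg : G.IsRegularOfDegree k) {v : V → ℝ} :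
    G.adjMatrix ℝ *ᵥ v = (k : ℝ) • v ↔ ∀ i j, G.Reachable i j → v i = v j := by
  rw [← lapMatrix_mulVec_eq_zero_iff_forall_reachable, eq_comm, ← sub_eq_zero]
  refine iff_of_eq (congrArg (· = 0) (funext fun i => ?_))
  rw [lapMatrix_mulVec_apply, hreg i, ← adjMatrix_mulVec_apply]
  rfl

lemma IsRegularOfDegree.exists_not_adj (hreg : G.IsRegularOfDegree k) (hnc : G ≠ ⊤) (x : V) :
    ∃ z, x ≠ z ∧ ¬ G.Adj x z := by
  by_contra! hx
  apply hnc
  rw [eq_top_iff_forall_isUniversal]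
  intro v
  rw [← degree_eq_card_sub_one, hreg v, ← hreg x, degree_eq_card_sub_one]
  exact hx

lemma not_eigenvalueSupport_adjMatrix_subset_pair [DecidableEq V] (hreg : G.IsRegularOfDegree k)
    (hconn : G.Connected) (hnc : G ≠ ⊤) (x : V) (θ : ℝ) :
    ¬ eigenvalueSupport (G.adjMatrix ℝ) (Pi.single x 1) ⊆ {(k : ℝ), θ} := by
  intro hsub
  set g := G.adjMatrix ℝ *ᵥ Pi.single x 1 - θ • Pi.single x 1
  have hg : G.adjMatrix ℝ *ᵥ g = (k : ℝ) • g := by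
    have h := (G.isHermitian_adjMatrix ℝ).aeval_mulVec_eq_zero
      (p := (X - C (k : ℝ)) * (X - C θ)) (w := Pi.single x 1) fun t ht => by
        rcases hsub ht with rfl | rfl <;> simp
    rw [aeval_mul, ← mulVec_mulVec] at h
    simp only [map_sub, aeval_X, aeval_C, sub_mulVec, Algebra.algebraMap_eq_smul_one,
      smul_mulVec, one_mulVec] at h
    rwa [sub_eq_zero] at h
  obtain ⟨z, hxz, hxz'⟩ := hreg.exists_not_adj hnc x
  have : Nontrivial V := ⟨x, z, hxz⟩
  obtain ⟨y, hxy⟩ := hconn.preconnected.exists_adj_of_nontrivial x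
  have h := (hreg.adjMatrix_mulVec_eq_smul_iff.1 hg) y z (hconn y z)
  simp [g, hxy, hxy.ne', hxz.symm, adj_comm, hxz'] at h

end SimpleGraph

open SimpleGraph

/-- For a connected non-complete `k`-regular graph with adjacency matrix `A`:
the orthogonal projection of `e_x` onto the `k`-eigenspace is the nonzero vector
`(1/n)𝟙` (i.e. `(1/n)𝟙` is a `k`-eigenvector and `e_x - (1/n)𝟙` is orthogonal to the
`k`-eigenspace), and the eigenvalue support of `e_x` contains at least three distinct
eigenvalues. -/
theorem stmt_6 {V : Type*} [Fintype V] [DecidableEq V] (G : SimpleGraph V)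
    [DecidableRel G.Adj] (k : ℕ)
    (hreg : G.IsRegularOfDegree k) (hconn : G.Connected) (hnc : G ≠ ⊤) (x : V) :
    ((G.adjMatrix ℝ).mulVec (fun _ => ((Fintype.card V : ℝ))⁻¹) =
        (k : ℝ) • (fun _ => ((Fintype.card V : ℝ))⁻¹)) ∧
    ((fun _ => ((Fintype.card V : ℝ))⁻¹) : V → ℝ) ≠ 0 ∧
    (∀ v : V → ℝ, (G.adjMatrix ℝ).mulVec v = (k : ℝ) • v →
      dotProduct v (Pi.single x 1 - fun _ => ((Fintype.card V : ℝ))⁻¹) = 0) ∧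
    (∃ θ₁ θ₂ θ₃ : ℝ, θ₁ ≠ θ₂ ∧ θ₁ ≠ θ₃ ∧ θ₂ ≠ θ₃ ∧
      ∀ θ ∈ ({θ₁, θ₂, θ₃} : Set ℝ),
        ∃ v : V → ℝ, (G.adjMatrix ℝ).mulVec v = θ • v ∧
          dotProduct v (Pi.single x 1) ≠ 0) := by
  have hconst (v : V → ℝ) (hv : G.adjMatrix ℝ *ᵥ v = (k : ℝ) • v) (a : V) : v a = v x :=
    hreg.adjMatrix_mulVec_eq_smul_iff.1 hv a x (hconn a x)
  have hn : (Fintype.card V : ℝ) ≠ 0 := by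
    have := hconn.nonempty
    exact Nat.cast_ne_zero.2 Fintype.card_ne_zero
  refine ⟨hreg.adjMatrix_mulVec_eq_smul_iff.2 fun _ _ _ => rfl,
    fun h => inv_ne_zero hn (congrFun h x), fun v hv => ?_, ?_⟩
  · rw [dotProduct_sub, dotProduct_single, mul_one, sub_eq_zero]
    simp only [dotProduct, hconst v hv, Finset.sum_const, Finset.card_univ, nsmul_eq_mul]
    field_simp
  · set S := eigenvalueSupport (G.adjMatrix ℝ) (Pi.single x 1)
    have hk : (k : ℝ) ∈ S :=
      ⟨fun _ => 1, hreg.adjMatrix_mulVec_eq_smul_iff.2 fun _ _ _ => rfl, by simp⟩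
    obtain ⟨θ₂, h₂, hk₂⟩ := Set.not_subset.1
      (not_eigenvalueSupport_adjMatrix_subset_pair hreg hconn hnc x k)
    obtain ⟨θ₃, h₃, hk₃⟩ := Set.not_subset.1
      (not_eigenvalueSupport_adjMatrix_subset_pair hreg hconn hnc x θ₂)
    simp only [Set.mem_insert_iff, Set.mem_singleton_iff, not_or] at hk₂ hk₃
    refine ⟨k, θ₂, θ₃, Ne.symm hk₂.1, Ne.symm hk₃.1, Ne.symm hk₃.2, ?_⟩
    rintro θ (rfl | rfl | rfl) <;> assumption
end

section
/- Let θ₁ > θ₂ > θ₃ be distinct reals. If (θ₂ - θ₃)θ₁ˡ + (θ₃ - θ₁)θ₂ˡ + (θ₁ - θ₂)θ₃ˡ = 0 holds for some odd ℓ ≥ 3 and θ₂ = 0, then θ₁ + θ₃ = 0; conversely, if θ₂ = 0 and θ₃ = -θ₁, then the identity holds for every odd ℓ. -/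
/-- For `θ₁ > θ₂ > θ₃`: if the strong `ℓ`-walk-regularity identity holds for some odd
`ℓ ≥ 3` and `θ₂ = 0`, then `θ₁ + θ₃ = 0`; conversely if `θ₂ = 0` and `θ₃ = -θ₁`, the
identity holds for every odd `ℓ`. -/
theorem stmt_9 (θ₁ θ₂ θ₃ : ℝ) (h12 : θ₁ > θ₂) (h23 : θ₂ > θ₃) :
    ((∃ ℓ : ℕ, Odd ℓ ∧ 3 ≤ ℓ ∧
        (θ₂ - θ₃) * θ₁ ^ ℓ + (θ₃ - θ₁) * θ₂ ^ ℓ + (θ₁ - θ₂) * θ₃ ^ ℓ = 0) →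
      θ₂ = 0 → θ₁ + θ₃ = 0) ∧
    (θ₂ = 0 → θ₃ = -θ₁ → ∀ ℓ : ℕ, Odd ℓ →
      (θ₂ - θ₃) * θ₁ ^ ℓ + (θ₃ - θ₁) * θ₂ ^ ℓ + (θ₁ - θ₂) * θ₃ ^ ℓ = 0) := by
  constructor
  · rintro ⟨ℓ, ⟨k, hk⟩, hge, heq⟩ h2
    subst h2
    subst hk
    have hk1 : 1 ≤ k := by omega
    have h1 : (0:ℝ) < θ₁ := h12
    have h3 : θ₃ < 0 := h23
    have hz : (0:ℝ) ^ (2 * k + 1) = 0 := zero_pow (by omega)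
    rw [hz] at heq
    have key : θ₃ * θ₁ ^ (2 * k + 1) = θ₁ * θ₃ ^ (2 * k + 1) := by linarith
    have e1 : θ₁ ^ (2 * k + 1) = θ₁ * (θ₁ ^ 2) ^ k := by ring
    have e3 : θ₃ ^ (2 * k + 1) = θ₃ * (θ₃ ^ 2) ^ k := by ring
    rw [e1, e3] at key
    have hne : θ₁ * θ₃ ≠ 0 := by
      apply mul_ne_zero h1.ne' h3.ne
    have hpow : (θ₁ ^ 2) ^ k = (θ₃ ^ 2) ^ k := by
      have := mul_left_cancel₀ hne (by ring_nf; ring_nf at key; linarith :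
        θ₁ * θ₃ * (θ₁ ^ 2) ^ k = θ₁ * θ₃ * (θ₃ ^ 2) ^ k)
      exact this
    have hsq : θ₁ ^ 2 = θ₃ ^ 2 :=
      (pow_left_inj₀ (sq_nonneg θ₁) (sq_nonneg θ₃) (by omega : k ≠ 0)).mp hpow
    nlinarith [sq_nonneg (θ₁ + θ₃)]
  · rintro h2 h3 ℓ hodd
    subst h2; subst h3
    rw [hodd.neg_pow]
    have hz : (0:ℝ) ^ ℓ = 0 := zero_pow (by rintro rfl; simp at hodd)
    rw [hz]
    ring
end

section
/- In the cycle graph C₇ on vertices x₀,…,x₆, let w_j^(k) denote the number of walks of length k from x₀ to x_j. Then for every k ≥ 2, w₂^(k) ≠ w₃^(k). In particular, C₇ is not strongly ℓ-walk-regular for any ℓ ≥ 2. -/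
/-- The cycle graph `C₇` on `ZMod 7`. -/
def cycleSeven : SimpleGraph (ZMod 7) := SimpleGraph.fromRel (fun a b => b = a + 1)

instance : DecidableRel cycleSeven.Adj := fun a b =>
  decidable_of_iff _ (SimpleGraph.fromRel_adj (fun a b => b = a + 1) a b).symm



def fw : ℕ → ZMod 7 → ℕ
  | 0, j => if j = 0 then 1 else 0
  | (k+1), j => fw k (j - 1) + fw k (j + 1)

lemma neighbors (j : ZMod 7) : cycleSeven.neighborFinset j = {j - 1, j + 1} := by
  revert j; decide

lemma key : ∀ (k : ℕ) (j : ZMod 7), ((cycleSeven.adjMatrix ℕ) ^ k) 0 j = fw k j := by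
  intro k
  induction k with
  | zero =>
      intro j
      simp [fw, Matrix.one_apply, eq_comm]
  | succ k ih =>
      intro j
      rw [pow_succ, SimpleGraph.mul_adjMatrix_apply, neighbors,
        Finset.sum_pair (show j - 1 ≠ j + 1 by revert j; decide)]
      simp [fw, ih]

lemma sym : ∀ k, fw k 6 = fw k 1 ∧ fw k 5 = fw k 2 ∧ fw k 4 = fw k 3 := by
  intro k
  induction k with
  | zero => decide
  | succ k ih =>
      obtain ⟨h1, h2, h3⟩ := ih
      refine ⟨?_, ?_, ?_⟩ <;> simp only [fw,
        show ((6:ZMod 7) - 1) = 5 by decide, show ((6:ZMod 7) + 1) = 0 by decide,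
        show ((1:ZMod 7) - 1) = 0 by decide, show ((1:ZMod 7) + 1) = 2 by decide,
        show ((5:ZMod 7) - 1) = 4 by decide, show ((5:ZMod 7) + 1) = 6 by decide,
        show ((2:ZMod 7) - 1) = 1 by decide, show ((2:ZMod 7) + 1) = 3 by decide,
        show ((4:ZMod 7) - 1) = 3 by decide, show ((4:ZMod 7) + 1) = 5 by decide,
        show ((3:ZMod 7) - 1) = 2 by decide, show ((3:ZMod 7) + 1) = 4 by decide] <;> omega

lemma step (k : ℕ) : fw (k+1) 0 = fw k 6 + fw k 1 ∧ fw (k+1) 1 = fw k 0 + fw k 2 ∧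
    fw (k+1) 2 = fw k 1 + fw k 3 ∧ fw (k+1) 3 = fw k 2 + fw k 4 := by
  refine ⟨?_, ?_, ?_, ?_⟩ <;> simp only [fw,
    show ((0:ZMod 7) - 1) = 6 by decide, show ((0:ZMod 7) + 1) = 1 by decide,
    show ((1:ZMod 7) - 1) = 0 by decide, show ((1:ZMod 7) + 1) = 2 by decide,
    show ((2:ZMod 7) - 1) = 1 by decide, show ((2:ZMod 7) + 1) = 3 by decide,
    show ((3:ZMod 7) - 1) = 2 by decide, show ((3:ZMod 7) + 1) = 4 by decide]

lemma ord : ∀ n, (fw (n+4) 0 > fw (n+4) 2 ∧ fw (n+4) 2 > fw (n+4) 3 ∧ fw (n+4) 3 > fw (n+4) 1)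
    ∨ (fw (n+4) 0 < fw (n+4) 2 ∧ fw (n+4) 2 < fw (n+4) 3 ∧ fw (n+4) 3 < fw (n+4) 1) := by
  intro n
  induction n with
  | zero => left; refine ⟨?_, ?_, ?_⟩ <;> decide
  | succ n ih =>
      obtain ⟨h1, h2, h3⟩ := sym (n+4)
      obtain ⟨e0, e1, e2, e3⟩ := step (n+4)
      have hh : n+1+4 = (n+4)+1 := by omega
      rw [hh, e0, e1, e2, e3]
      omega

/-- In `C₇`, the numbers of walks of length `k ≥ 2` from `x₀` to `x₂` and from `x₀`
to `x₃` always differ; in particular `C₇` is not strongly `ℓ`-walk-regular for any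
`ℓ ≥ 2`. -/
theorem stmt_10 :
    (∀ k : ℕ, 2 ≤ k →
      ((cycleSeven.adjMatrix ℕ) ^ k) 0 2 ≠ ((cycleSeven.adjMatrix ℕ) ^ k) 0 3) ∧
    (∀ ℓ : ℕ, 2 ≤ ℓ → ¬∃ a b c : ℚ, (cycleSeven.adjMatrix ℚ) ^ ℓ =
      a • (1 : Matrix (ZMod 7) (ZMod 7) ℚ) + b • cycleSeven.adjMatrix ℚ +
        c • Matrix.of (fun _ _ => (1 : ℚ))) := by
  have main : ∀ k : ℕ, 2 ≤ k →
      ((cycleSeven.adjMatrix ℕ) ^ k) 0 2 ≠ ((cycleSeven.adjMatrix ℕ) ^ k) 0 3 := by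
    intro k hk
    rw [key, key]
    rcases lt_or_ge k 4 with h | h
    · interval_cases k <;> decide
    · obtain ⟨n, rfl⟩ := Nat.exists_eq_add_of_le h
      have := ord n
      rw [show 4 + n = n + 4 by omega]
      omega
  refine ⟨main, ?_⟩
  intro ℓ hℓ ⟨a, b, c, hE⟩
  have cast : ∀ j : ZMod 7, ((cycleSeven.adjMatrix ℚ) ^ ℓ) 0 j
      = (((cycleSeven.adjMatrix ℕ) ^ ℓ) 0 j : ℚ) := by
    have hA : (Nat.castRingHom ℚ).mapMatrix (cycleSeven.adjMatrix ℕ)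
        = cycleSeven.adjMatrix ℚ := by
      ext i j
      simp [SimpleGraph.adjMatrix_apply, Matrix.map_apply, apply_ite]
    intro j
    rw [← hA, ← map_pow]
    simp [Matrix.map_apply]
  have h2 := congrFun (congrFun hE 0) 2
  have h3 := congrFun (congrFun hE 0) 3
  have hadj2 : ¬ cycleSeven.Adj 0 2 := by decide
  have hadj3 : ¬ cycleSeven.Adj 0 3 := by decide
  rw [cast] at h2 h3
  simp [Matrix.add_apply, Matrix.smul_apply, Matrix.one_apply, hadj2, hadj3,
    show (0 : ZMod 7) ≠ 2 by decide, show (0 : ZMod 7) ≠ 3 by decide] at h2 h3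
  exact main ℓ hℓ (Nat.cast_injective (h2.trans h3.symm))
end

section
/- Suppose a k-regular connected graph on n vertices has spectrum {k (multiplicity 1), k/4·(1+√5) and k/4·(1-√5) each with multiplicity β, and -k/2 with multiplicity α}, where α, β are positive integers. Then the trace conditions (sum of eigenvalues = 0 and sum of squares = nk) imply (k-3)(4β+3) = 3, which has no solution with k ≥ 2 and β ≥ 1. -/
/-- There is no `k`-regular graph (`k ≥ 2`) on `n` vertices with spectrum
`{[k]¹, [k(1±√5)/4]^β, [-k/2]^α}` with `α, β ≥ 1`: the trace conditions
(eigenvalues sum to `0` and their squares sum to `nk`) are contradictory. -/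
theorem stmt_12 (k n α β : ℕ) (hk : 2 ≤ k) (hα : 1 ≤ α) (hβ : 1 ≤ β)
    (hmult : 1 + α + β + β = n)
    (hsum : (k : ℝ) + (β : ℝ) * ((k : ℝ) / 4 * (1 + Real.sqrt 5))
      + (β : ℝ) * ((k : ℝ) / 4 * (1 - Real.sqrt 5)) + (α : ℝ) * (-(k : ℝ) / 2) = 0)
    (hsq : (k : ℝ) ^ 2 + (β : ℝ) * ((k : ℝ) / 4 * (1 + Real.sqrt 5)) ^ 2
      + (β : ℝ) * ((k : ℝ) / 4 * (1 - Real.sqrt 5)) ^ 2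
      + (α : ℝ) * (-(k : ℝ) / 2) ^ 2 = (n : ℝ) * (k : ℝ)) :
    False := by
  have h5 : Real.sqrt 5 * Real.sqrt 5 = 5 := Real.mul_self_sqrt (by norm_num)
  have hk' : (2:ℝ) ≤ (k:ℝ) := by exact_mod_cast hk
  have hk0 : (0:ℝ) < (k:ℝ) := by linarith
  have hβ' : (1:ℝ) ≤ (β:ℝ) := by exact_mod_cast hβ
  have hn : (n:ℝ) = 1 + α + β + β := by exact_mod_cast hmult.symm
  rw [hn] at hsq
  -- from hsum: α = β + 2
  have hA : (α:ℝ) = (β:ℝ) + 2 := by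
    have h1 : (k:ℝ) * ((α:ℝ) - (β:ℝ) - 2) = 0 := by nlinarith [hsum, h5]
    have := mul_eq_zero.mp h1
    rcases this with h | h
    · exact absurd h (ne_of_gt hk0)
    · linarith
  rw [hA] at hsq
  -- from hsq: k*(2β+3) = 6β+6
  have hB : (k:ℝ) * (2*(β:ℝ) + 3) = 6*(β:ℝ) + 6 := by
    have h2 : (k:ℝ) * ((k:ℝ) * (2*(β:ℝ)+3) - (6*(β:ℝ)+6)) = 0 := by
      linear_combination 2*hsq - ((β:ℝ)*(k:ℝ)^2/4)*h5
    rcases mul_eq_zero.mp h2 with h | h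
    · exact absurd h (ne_of_gt hk0)
    · linarith
  rcases eq_or_lt_of_le hk' with h | h
  · nlinarith
  · have h3 : (3:ℝ) ≤ (k:ℝ) := by
      have : (3:ℕ) ≤ k := by
        by_contra hc
        push_neg at hc
        interval_cases k <;> simp_all <;> norm_num at h
      exact_mod_cast this
    nlinarith
end

section
/- Let Γ be a connected k-regular graph on n vertices with adjacency spectrum {[k]¹, [k/2]^α, [0]^β, [-k/2]^γ}. Then the number of triangles through any fixed vertex x equals 3k³/(8n), assuming (A³)_{x,x} is independent of x (walk-regularity). Moreover n ≤ (3/4)k³. -/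
/-!
Count closed walks of length three in two ways. Combinatorially, `(A³)ₓₓ` is twice the number
`t` of triangles through `x`, so walk-regularity gives `tr A³ = 2nt`. Spectrally, `tr A = 0`
forces `γ = α + 2`, so `tr A³ = k³ + (α - γ)(k/2)³ = (3/4)k³`. Hence `t = 3k³/(8n)`; as `t` is
then a positive integer, `n ≤ nt ≤ (3/4)k³`.
-/

open Polynomial Finset

namespace Matrix.IsHermitian

variable {n : Type*} [Fintype n] [DecidableEq n]

theorem trace_pow_eq_sum_eigenvalues_pow {𝕜 : Type*} [RCLike 𝕜] {A : Matrix n n 𝕜}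
    (hA : A.IsHermitian) (m : ℕ) :
    (A ^ m).trace = ∑ i, (hA.eigenvalues i : 𝕜) ^ m := by
  conv_lhs => rw [hA.spectral_theorem, ← map_pow, Unitary.conjStarAlgAut_apply, trace_mul_cycle,
    Unitary.coe_star_mul_self, one_mul, diagonal_pow, trace_diagonal]
  simp

theorem map_eigenvalues_eq_of_charpoly_eq {A : Matrix n n ℝ} (hA : A.IsHermitian)
    {s : Multiset ℝ} (h : A.charpoly = (s.map fun a => X - C a).prod) :
    univ.val.map hA.eigenvalues = s := by
  simpa [h] using hA.roots_charpoly_eq_eigenvalues.symm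

theorem trace_pow_eq_of_charpoly_eq {A : Matrix n n ℝ} (hA : A.IsHermitian)
    {s : Multiset ℝ} (h : A.charpoly = (s.map fun a => X - C a).prod) (m : ℕ) :
    (A ^ m).trace = (s.map (· ^ m)).sum := by
  rw [hA.trace_pow_eq_sum_eigenvalues_pow, ← hA.map_eigenvalues_eq_of_charpoly_eq h,
    Multiset.map_map]
  rfl

theorem trace_pow_three_eq_of_charpoly_eq {A : Matrix n n ℝ} (hA : A.IsHermitian)
    (htr : A.trace = 0) {k : ℝ} (hk : k ≠ 0) {α β γ : ℕ}
    (hchar : A.charpoly = (X - C k) * (X - C (k / 2)) ^ α * X ^ β * (X + C (k / 2)) ^ γ) :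
    (A ^ 3).trace = 3 / 4 * k ^ 3 := by
  have hspec : A.charpoly = ((k ::ₘ (Multiset.replicate α (k / 2) + Multiset.replicate β 0 +
      Multiset.replicate γ (-(k / 2)))).map fun a => X - C a).prod := by
    rw [hchar]
    simp only [Multiset.map_cons, Multiset.map_add, Multiset.map_replicate, Multiset.prod_cons,
      Multiset.prod_add, Multiset.prod_replicate, map_zero, sub_zero, map_neg, sub_neg_eq_add]
    ring
  have hpowsum (m : ℕ) : (A ^ m).trace =
      k ^ m + α * (k / 2) ^ m + β * 0 ^ m + γ * (-(k / 2)) ^ m := by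
    rw [hA.trace_pow_eq_of_charpoly_eq hspec m]
    simp [add_assoc]
  have hγ : (γ : ℝ) = α + 2 := by
    have h := hpowsum 1
    rw [pow_one, htr] at h
    exact mul_left_cancel₀ hk (by linarith : k * γ = k * (α + 2))
  rw [hpowsum, hγ]
  ring

end Matrix.IsHermitian

theorem Finset.filter_insert_insert_eq_offDiag_erase {α : Type*} [Fintype α] [DecidableEq α]
    {x : α} {t : Finset α} (ht : #t = 3) (hx : x ∈ t) :
    ({p : α × α | {x, p.1, p.2} = t} : Finset (α × α)) = (t.erase x).offDiag := by
  ext ⟨a, b⟩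
  simp only [mem_filter, mem_univ, true_and, mem_offDiag, mem_erase]
  constructor
  · rintro rfl
    -- a coincidence among `x, a, b` would leave at most two elements
    refine ⟨⟨?_, by simp⟩, ⟨?_, by simp⟩, ?_⟩ <;> rintro rfl
      <;> simp only [mem_insert, mem_singleton, true_or, or_true, insert_eq_of_mem] at ht
      <;> exact absurd ht (card_le_two.trans_lt (by norm_num)).ne
  · rintro ⟨⟨hax, ha⟩, ⟨hbx, hb⟩, hab⟩
    refine eq_of_subset_of_card_le (by simp [insert_subset_iff, hx, ha, hb]) ?_
    rw [ht, card_eq_three.mpr ⟨x, a, b, hax.symm, hbx.symm, hab, rfl⟩]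

namespace SimpleGraph
variable {V : Type*} [Fintype V] [DecidableEq V] (G : SimpleGraph V) [DecidableRel G.Adj]

theorem card_isNClique_three_insert (x : V) :
    #{p : V × V | G.IsNClique 3 {x, p.1, p.2}} = 2 * #{s ∈ G.cliqueFinset 3 | x ∈ s} := by
  rw [card_eq_sum_card_fiberwise (f := fun p => ({x, p.1, p.2} : Finset V))
    (t := {s ∈ G.cliqueFinset 3 | x ∈ s}) (fun p hp => by simp_all)]
  refine (sum_congr rfl fun t ht => ?_).trans (by rw [sum_const, smul_eq_mul, mul_comm])
  simp only [mem_filter, mem_cliqueFinset_iff] at ht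
  rw [filter_filter, filter_congr (q := fun p : V × V => ({x, p.1, p.2} : Finset V) = t)
    fun p _ => ⟨And.right, fun h => ⟨h ▸ ht.1, h⟩⟩]
  rw [filter_insert_insert_eq_offDiag_erase ht.1.card_eq ht.2, offDiag_card,
    card_erase_of_mem ht.2, ht.1.card_eq]

theorem adjMatrix_pow_three_apply (R : Type*) [Semiring R] (x y : V) :
    (G.adjMatrix R ^ 3) x y = #{p : V × V | G.Adj x p.1 ∧ G.Adj p.1 p.2 ∧ G.Adj p.2 y} := by
  rw [card_filter, Nat.cast_sum, Fintype.sum_prod_type, pow_three]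
  simp only [Matrix.mul_apply, adjMatrix_apply, Finset.mul_sum, ite_mul, one_mul, zero_mul,
    ← ite_and, Nat.cast_ite, Nat.cast_one, Nat.cast_zero]

theorem adjMatrix_pow_three_apply_self (R : Type*) [Semiring R] (x : V) :
    (G.adjMatrix R ^ 3) x x = 2 * #{s ∈ G.cliqueFinset 3 | x ∈ s} := by
  have hclique (p : V × V) :
      G.IsNClique 3 {x, p.1, p.2} ↔ G.Adj x p.1 ∧ G.Adj p.1 p.2 ∧ G.Adj p.2 x := by
    rw [is3Clique_triple_iff]; tauto
  rw [adjMatrix_pow_three_apply, ← filter_congr fun p _ => hclique p,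
    card_isNClique_three_insert]
  norm_cast

end SimpleGraph

theorem stmt_15_general {V : Type*} [Fintype V] [DecidableEq V] (G : SimpleGraph V)
    [DecidableRel G.Adj] (n k α β γ : ℕ) (hk : 0 < k)
    (hn : Fintype.card V = n)
    (hchar : (G.adjMatrix ℝ).charpoly =
      (X - C (k : ℝ)) * (X - C ((k : ℝ) / 2)) ^ α * X ^ β * (X + C ((k : ℝ) / 2)) ^ γ)
    (hwalk : ∀ y z : V, ((G.adjMatrix ℝ) ^ 3) y y = ((G.adjMatrix ℝ) ^ 3) z z)
    (x : V) :
    ((((G.cliqueFinset 3).filter (fun s => x ∈ s)).card : ℝ)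
        = 3 * (k : ℝ) ^ 3 / (8 * (n : ℝ))) ∧
    (n : ℝ) ≤ 3 / 4 * (k : ℝ) ^ 3 := by
  set t := #{s ∈ G.cliqueFinset 3 | x ∈ s}
  have hk' : (0 : ℝ) < k := by exact_mod_cast hk
  have hn' : (0 : ℝ) < n := by rw [← hn]; exact_mod_cast Fintype.card_pos_iff.mpr ⟨x⟩
  have hcubes : ((G.adjMatrix ℝ) ^ 3).trace = 3 / 4 * (k : ℝ) ^ 3 :=
    (G.isHermitian_adjMatrix ℝ).trace_pow_three_eq_of_charpoly_eq (G.trace_adjMatrix ℝ) hk'.ne'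
      hchar
  have hwalks : ((G.adjMatrix ℝ) ^ 3).trace = n * (2 * t) := by
    simp only [Matrix.trace, Matrix.diag_apply]
    rw [Fintype.sum_congr _ _ fun y => hwalk y x, sum_const, card_univ, hn,
      G.adjMatrix_pow_three_apply_self, nsmul_eq_mul]
  have hnt : 2 * (t : ℝ) * n = 3 / 4 * (k : ℝ) ^ 3 := by linarith
  have ht : (1 : ℝ) ≤ t := by
    rw [Nat.one_le_cast, Nat.one_le_iff_ne_zero]
    rintro h0
    rw [h0, Nat.cast_zero] at hnt
    linarith [pow_pos hk' 3]
  constructor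
  · rw [eq_div_iff (by positivity)]; linarith
  · nlinarith

/-- For a connected `k`-regular graph on `n` vertices with adjacency spectrum
`{[k]¹, [k/2]^α, [0]^β, [-k/2]^γ}`, assuming `(A³)_{x,x}` is independent of `x`
(walk-regularity), the number of triangles through any vertex `x` equals `3k³/(8n)`,
and `n ≤ (3/4)k³`. -/
theorem stmt_15 {V : Type*} [Fintype V] [DecidableEq V] (G : SimpleGraph V)
    [DecidableRel G.Adj] (n k α β γ : ℕ) (hk : 0 < k)
    (hn : Fintype.card V = n)
    (hreg : G.IsRegularOfDegree k) (hconn : G.Connected)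
    (hchar : (G.adjMatrix ℝ).charpoly =
      (X - C (k : ℝ)) * (X - C ((k : ℝ) / 2)) ^ α * X ^ β * (X + C ((k : ℝ) / 2)) ^ γ)
    (hwalk : ∀ y z : V, ((G.adjMatrix ℝ) ^ 3) y y = ((G.adjMatrix ℝ) ^ 3) z z)
    (x : V) :
    ((((G.cliqueFinset 3).filter (fun s => x ∈ s)).card : ℝ)
        = 3 * (k : ℝ) ^ 3 / (8 * (n : ℝ))) ∧
    (n : ℝ) ≤ 3 / 4 * (k : ℝ) ^ 3 :=
  stmt_15_general G n k α β γ hk hn hchar hwalk x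
end

section
/- Let Γ be a connected k-regular graph whose distinct adjacency eigenvalues are exactly {k, k/2, 0, -k/2}, and let U be the Grover walk time evolution matrix of Γ. Then U¹² = I, i.e., Γ is periodic with period dividing 12. -/
/-- The set of symmetric arcs of a graph. -/
abbrev arcSet {V : Type*} (G : SimpleGraph V) : Type _ := {p : V × V // G.Adj p.1 p.2}

/-- The boundary matrix `d` of the Grover walk: `d_{x,a} = (deg x)^{-1/2} δ_{x,t(a)}`. -/
noncomputable def bdryMatrix {V : Type*} [Fintype V] [DecidableEq V]
    (G : SimpleGraph V) [DecidableRel G.Adj] : Matrix V (arcSet G) ℝ :=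
  fun x a => if x = a.1.2 then (Real.sqrt (G.degree x))⁻¹ else 0

/-- The shift (arc-reversal) matrix `R`: `R_{a,b} = δ_{a,b⁻¹}`. -/
def shiftMatrix {V : Type*} [Fintype V] [DecidableEq V]
    (G : SimpleGraph V) [DecidableRel G.Adj] : Matrix (arcSet G) (arcSet G) ℝ :=
  fun a b => if a.1 = (b.1.2, b.1.1) then 1 else 0

/-- The Grover walk time evolution matrix `U = R(2d*d - I)`. -/
noncomputable def groverMatrix {V : Type*} [Fintype V] [DecidableEq V]
    (G : SimpleGraph V) [DecidableRel G.Adj] : Matrix (arcSet G) (arcSet G) ℝ :=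
  shiftMatrix G * (2 • ((bdryMatrix G).transpose * bdryMatrix G) - 1)

/-!
Let `d` be the boundary matrix, `R` the arc reversal and `A` the adjacency matrix, so that
`d dᵀ = 1` and `d R dᵀ = A / k`. Then `U dᵀ = R dᵀ` and `U (R dᵀ) = (2 / k) R dᵀ A - dᵀ`, so for
an eigenvector `v` of `A` with eigenvalue `μ` the vector `f = dᵀ v` satisfies
`U² f = (2μ/k) U f - f`. For `2μ/k ∈ {1, 0, -1}` the polynomial `t² - (2μ/k) t + 1` divides
`t¹² - 1`; for `μ = k` the eigenvector is constant along edges, so `R dᵀ v = dᵀ v` and `U f = f`.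
As the eigenvectors of `A` span, `T = U¹² - 1` kills `dᵀ` and `R dᵀ = U dᵀ`. The columns of
`U² - 1` lie in their span, so `T (U² - 1) = 0` and hence `T² = 0`. Finally `U` is orthogonal, so
`T` is normal, and a normal matrix with `T² = 0` vanishes.
-/

open Matrix

theorem Matrix.IsHermitian.eq_zero_of_mulVec_eigenvector {ι κ 𝕜 : Type*} [Fintype κ]
    [DecidableEq κ] [RCLike 𝕜] {A : Matrix κ κ 𝕜} (hA : A.IsHermitian) {M : Matrix ι κ 𝕜}
    (h : ∀ (μ : ℝ) (v : κ → 𝕜), v ≠ 0 → A *ᵥ v = μ • v → M *ᵥ v = 0) : M = 0 := by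
  set Q : Matrix κ κ 𝕜 := (hA.eigenvectorUnitary : Matrix κ κ 𝕜)
  have hMQ : M * Q = 0 := by
    refine ext_of_mulVec_single fun j => ?_
    rw [← mulVec_mulVec, hA.eigenvectorUnitary_mulVec, zero_mulVec]
    exact h _ _ (by simpa using hA.eigenvectorBasis.orthonormal.ne_zero j)
      (hA.mulVec_eigenvectorBasis j)
  calc M = M * Q * star Q := by
        rw [Matrix.mul_assoc, Unitary.mul_star_self_of_mem hA.eigenvectorUnitary.2, Matrix.mul_one]
    _ = 0 := by rw [hMQ, Matrix.zero_mul]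

theorem Matrix.eq_zero_of_commute_transpose_of_mul_self_eq_zero {ι : Type*} [Fintype ι]
    {T : Matrix ι ι ℝ} (hT : Commute Tᵀ T) (h : T * T = 0) : T = 0 := by
  have hsq : (Tᵀ * T)ᵀ * (Tᵀ * T) = 0 := by
    rw [transpose_mul, transpose_transpose, mul_assoc, ← mul_assoc T, ← hT.eq, mul_assoc,
      h, mul_zero, mul_zero]
  rw [← conjTranspose_eq_transpose_of_trivial, conjTranspose_mul_self_eq_zero,
    ← conjTranspose_eq_transpose_of_trivial, conjTranspose_mul_self_eq_zero] at hsq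
  exact hsq

theorem Matrix.commute_transpose_pow_sub_one {ι : Type*} [Fintype ι] [DecidableEq ι]
    {W : Matrix ι ι ℝ} (hW : Wᵀ * W = 1) (n : ℕ) : Commute (W ^ n - 1)ᵀ (W ^ n - 1) := by
  have hc : Commute Wᵀ W := hW.trans (mul_eq_one_comm.mp hW).symm
  rw [transpose_sub, transpose_pow, transpose_one]
  exact ((hc.pow_pow n n).sub_left (Commute.one_left _)).sub_right (Commute.one_right _)

theorem Matrix.pow_eq_one_of_mul_pow_sub_one_eq_zero {ι : Type*} [Fintype ι] [DecidableEq ι]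
    {W : Matrix ι ι ℝ} (hW : Wᵀ * W = 1) {d n : ℕ} (hdn : d ∣ n)
    (h : (W ^ n - 1) * (W ^ d - 1) = 0) : W ^ n = 1 := by
  obtain ⟨m, rfl⟩ := hdn
  have hsq : (W ^ (d * m) - 1) * (W ^ (d * m) - 1) = 0 :=
    calc (W ^ (d * m) - 1) * (W ^ (d * m) - 1)
        = (W ^ (d * m) - 1) * ((W ^ d - 1) * ∑ i ∈ Finset.range m, (W ^ d) ^ i) := by
          rw [mul_geom_sum, ← pow_mul]
      _ = 0 := by rw [← mul_assoc, h, zero_mul]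
  exact sub_eq_zero.mp <|
    eq_zero_of_commute_transpose_of_mul_self_eq_zero (commute_transpose_pow_sub_one hW _) hsq

open Polynomial in
theorem Matrix.pow_twelve_mulVec_eq_self_of_mulVec_mulVec_eq {ι : Type*} [Fintype ι]
    [DecidableEq ι] {U : Matrix ι ι ℝ} {x : ℝ} (hx : x = -1 ∨ x = 0 ∨ x = 1) {f : ι → ℝ}
    (hf : U *ᵥ (U *ᵥ f) = x • (U *ᵥ f) - f) : U ^ 12 *ᵥ f = f := by
  obtain ⟨q, hq⟩ : ∃ q : ℝ[X], X ^ 12 - 1 = q * (X ^ 2 - C x * X + 1) := by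
    rcases hx with rfl | rfl | rfl
    · exact ⟨(X ^ 9 + X ^ 6 + X ^ 3 + 1) * (X - 1), by simp only [map_neg, map_one]; ring⟩
    · exact ⟨X ^ 10 - X ^ 8 + X ^ 6 - X ^ 4 + X ^ 2 - 1, by simp only [map_zero]; ring⟩
    · exact ⟨(X ^ 9 - X ^ 6 + X ^ 3 - 1) * (X + 1), by simp only [map_one]; ring⟩
  have hU := congrArg (aeval U) hq
  simp only [map_sub, map_mul, map_add, map_pow, aeval_X, aeval_C, map_one] at hU
  have h0 : (U ^ 2 - algebraMap ℝ _ x * U + 1) *ᵥ f = 0 := by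
    rw [← Algebra.smul_def, Matrix.add_mulVec, Matrix.sub_mulVec, Matrix.smul_mulVec, one_mulVec,
      sq, ← mulVec_mulVec, hf]
    abel
  have h12 : (U ^ 12 - 1) *ᵥ f = 0 := by rw [hU, ← mulVec_mulVec, h0, mulVec_zero]
  rwa [Matrix.sub_mulVec, one_mulVec, sub_eq_zero] at h12

@[simps]
def arcReverse {V : Type*} (G : SimpleGraph V) : Equiv.Perm (arcSet G) where
  toFun a := ⟨a.1.swap, a.2.symm⟩
  invFun a := ⟨a.1.swap, a.2.symm⟩
  left_inv _ := rfl
  right_inv _ := rfl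

theorem sum_arcSet {V : Type*} [Fintype V] {G : SimpleGraph V} [DecidableRel G.Adj]
    (f : arcSet G → ℝ) :
    ∑ a, f a = ∑ x, ∑ y, if h : G.Adj x y then f ⟨(x, y), h⟩ else 0 := by
  rw [← Fintype.sum_prod_type', Finset.sum_dite, Finset.sum_const_zero, add_zero]
  exact Fintype.sum_equiv (Equiv.subtypeEquivRight (by simp)) _ _ fun _ => rfl

section Grover

variable {V : Type*} [Fintype V] [DecidableEq V] {G : SimpleGraph V} [DecidableRel G.Adj]

theorem shiftMatrix_eq_permMatrix : shiftMatrix G = (arcReverse G).permMatrix ℝ := by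
  ext a b
  simp only [shiftMatrix, PEquiv.toMatrix_apply, Equiv.toPEquiv_apply, Option.mem_def,
    Option.some.injEq, Subtype.ext_iff, arcReverse_apply_coe, Prod.swap_eq_iff_eq_swap]
  rfl

theorem shiftMatrix_mul_self : shiftMatrix G * shiftMatrix G = 1 := by
  rw [shiftMatrix_eq_permMatrix, ← permMatrix_mul]
  convert permMatrix_one
  exact Equiv.ext fun _ => rfl

theorem transpose_shiftMatrix : (shiftMatrix G)ᵀ = shiftMatrix G := by
  rw [shiftMatrix_eq_permMatrix, transpose_permMatrix]
  rfl

theorem bdryMatrix_mul_transpose (hdeg : ∀ x, 0 < G.degree x) :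
    bdryMatrix G * (bdryMatrix G)ᵀ = 1 := by
  ext x y
  simp only [mul_apply, bdryMatrix, transpose_apply, sum_arcSet]
  simp only [dite_eq_ite, ite_mul, mul_ite, zero_mul, mul_zero, ← ite_and,
    and_comm (a := G.Adj _ _)]
  simp only [ite_and, Finset.sum_ite_eq, Finset.mem_univ, if_true, Finset.sum_ite_irrel,
    Finset.sum_const_zero, one_apply]
  split_ifs with hxy
  · subst hxy
    have hx : (G.degree x : ℝ) ≠ 0 := by exact_mod_cast (hdeg x).ne'
    simp only [G.adj_comm _ x]
    rw [← Finset.sum_filter, ← G.neighborFinset_eq_filter, Finset.sum_const,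
      G.card_neighborFinset_eq_degree, nsmul_eq_mul, ← mul_inv,
      Real.mul_self_sqrt (Nat.cast_nonneg _), mul_inv_cancel₀ hx]
  · rfl

theorem bdryMatrix_mul_shiftMatrix_mul_transpose {k : ℕ} (hreg : G.IsRegularOfDegree k) :
    bdryMatrix G * shiftMatrix G * (bdryMatrix G)ᵀ = (k : ℝ)⁻¹ • G.adjMatrix ℝ := by
  ext x y
  rw [shiftMatrix_eq_permMatrix, Matrix.mul_assoc, PEquiv.toMatrix_toPEquiv_mul]
  simp only [mul_apply, bdryMatrix, transpose_apply, sum_arcSet, submatrix_apply,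
    arcReverse_apply_coe]
  simp only [dite_eq_ite, ite_mul, mul_ite, zero_mul, mul_zero, ← ite_and, Prod.snd_swap, id,
    and_comm (a := G.Adj _ _)]
  simp only [ite_and, Finset.sum_ite_irrel, Finset.sum_ite_eq, Finset.mem_univ, if_true,
    Finset.sum_const_zero, G.adj_comm y, hreg.degree_eq, ← mul_inv,
    Real.mul_self_sqrt (Nat.cast_nonneg _), Matrix.smul_apply, SimpleGraph.adjMatrix_apply,
    smul_eq_mul, mul_ite, mul_one, mul_zero]

theorem groverMatrix_mul_transpose_bdryMatrix (hdeg : ∀ x, 0 < G.degree x) :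
    groverMatrix G * (bdryMatrix G)ᵀ = shiftMatrix G * (bdryMatrix G)ᵀ := by
  rw [groverMatrix, Matrix.mul_assoc, Matrix.sub_mul, Matrix.smul_mul, Matrix.mul_assoc,
    bdryMatrix_mul_transpose hdeg, Matrix.mul_one, Matrix.one_mul, two_smul, add_sub_cancel_right]

theorem groverMatrix_mul_shiftMatrix_mul_transpose_bdryMatrix {k : ℕ}
    (hreg : G.IsRegularOfDegree k) :
    groverMatrix G * (shiftMatrix G * (bdryMatrix G)ᵀ) =
      (2 / k : ℝ) • (shiftMatrix G * (bdryMatrix G)ᵀ * G.adjMatrix ℝ) - (bdryMatrix G)ᵀ := by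
  have hP := bdryMatrix_mul_shiftMatrix_mul_transpose hreg
  rw [groverMatrix, Matrix.mul_assoc, Matrix.sub_mul, Matrix.smul_mul, Matrix.mul_assoc,
    Matrix.mul_assoc, ← Matrix.mul_assoc (bdryMatrix G), hP, Matrix.one_mul, Matrix.mul_sub,
    ← Matrix.mul_assoc, shiftMatrix_mul_self, Matrix.one_mul, Matrix.mul_smul, Matrix.mul_smul,
    two_smul, div_eq_mul_inv, two_mul, add_smul, Matrix.mul_smul]

theorem transpose_groverMatrix_mul_self (hdeg : ∀ x, 0 < G.degree x) :
    (groverMatrix G)ᵀ * groverMatrix G = 1 := by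
  rw [groverMatrix]
  set N := (bdryMatrix G)ᵀ * bdryMatrix G
  have hN : N * N = N := by
    rw [Matrix.mul_assoc, ← Matrix.mul_assoc (bdryMatrix G), bdryMatrix_mul_transpose hdeg,
      Matrix.one_mul]
  have hNt : Nᵀ = N := by rw [transpose_mul, transpose_transpose]
  rw [transpose_mul, transpose_shiftMatrix, transpose_sub, transpose_smul,
    transpose_one, hNt, Matrix.mul_assoc, ← Matrix.mul_assoc (shiftMatrix G), shiftMatrix_mul_self,
    Matrix.one_mul, sub_mul, mul_sub, mul_sub, smul_mul_smul_comm, hN, mul_one, one_mul, mul_one]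
  abel

theorem groverMatrix_sq :
    groverMatrix G ^ 2 = 2 • (shiftMatrix G * (bdryMatrix G)ᵀ * (bdryMatrix G * groverMatrix G)
      - (bdryMatrix G)ᵀ * bdryMatrix G) + 1 := by
  have hRU : shiftMatrix G * groverMatrix G = 2 • ((bdryMatrix G)ᵀ * bdryMatrix G) - 1 := by
    rw [groverMatrix, ← Matrix.mul_assoc, shiftMatrix_mul_self, Matrix.one_mul]
  calc groverMatrix G ^ 2
      = shiftMatrix G * (2 • ((bdryMatrix G)ᵀ * bdryMatrix G) - 1) * groverMatrix G := by
        rw [sq, groverMatrix]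
    _ = 2 • (shiftMatrix G * (bdryMatrix G)ᵀ * (bdryMatrix G * groverMatrix G))
          - shiftMatrix G * groverMatrix G := by
        simp only [Matrix.mul_sub, Matrix.sub_mul, Matrix.mul_smul, Matrix.smul_mul,
          Matrix.mul_one, Matrix.mul_assoc]
    _ = _ := by rw [hRU, smul_sub]; abel

theorem transpose_bdryMatrix_mulVec_apply (v : V → ℝ) (a : arcSet G) :
    ((bdryMatrix G)ᵀ *ᵥ v) a = (√(G.degree a.1.2))⁻¹ * v a.1.2 := by
  simp [mulVec, dotProduct, bdryMatrix]

theorem shiftMatrix_mul_transpose_bdryMatrix_mulVec {k : ℕ} (hreg : G.IsRegularOfDegree k)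
    {v : V → ℝ} (hv : ∀ x y, G.Adj x y → v x = v y) :
    (shiftMatrix G * (bdryMatrix G)ᵀ) *ᵥ v = (bdryMatrix G)ᵀ *ᵥ v := by
  ext a
  rw [← mulVec_mulVec, shiftMatrix_eq_permMatrix, permMatrix_mulVec, Function.comp_apply,
    transpose_bdryMatrix_mulVec_apply, transpose_bdryMatrix_mulVec_apply]
  simp only [arcReverse_apply_coe, Prod.snd_swap, hreg.degree_eq, hv _ _ a.2]

theorem adj_eq_of_adjMatrix_mulVec_eq_smul {k : ℕ} (hreg : G.IsRegularOfDegree k)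
    {v : V → ℝ} (hv : G.adjMatrix ℝ *ᵥ v = (k : ℝ) • v) : ∀ x y, G.Adj x y → v x = v y := by
  refine G.lapMatrix_mulVec_eq_zero_iff_forall_adj.mp (funext fun x => ?_)
  rw [SimpleGraph.lapMatrix_mulVec_apply, ← SimpleGraph.adjMatrix_mulVec_apply, hv,
    hreg.degree_eq, Pi.smul_apply, smul_eq_mul, sub_self, Pi.zero_apply]

theorem groverMatrix_pow_twelve_mulVec_transpose_bdryMatrix {k : ℕ}
    (hreg : G.IsRegularOfDegree k) (hk : 0 < k) {μ : ℝ} {v : V → ℝ}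
    (hv : G.adjMatrix ℝ *ᵥ v = μ • v) (hμ : μ ∈ ({(k : ℝ), (k : ℝ) / 2, 0, -(k : ℝ) / 2} : Set ℝ)) :
    groverMatrix G ^ 12 *ᵥ ((bdryMatrix G)ᵀ *ᵥ v) = (bdryMatrix G)ᵀ *ᵥ v := by
  have hdeg : ∀ x, 0 < G.degree x := fun x => hreg.degree_eq x ▸ hk
  set U := groverMatrix G
  set f := (bdryMatrix G)ᵀ *ᵥ v
  set g := (shiftMatrix G * (bdryMatrix G)ᵀ) *ᵥ v
  have hUf : U *ᵥ f = g := by rw [mulVec_mulVec, groverMatrix_mul_transpose_bdryMatrix hdeg]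
  have hUg : U *ᵥ g = (2 * μ / k) • g - f := by
    rw [mulVec_mulVec, groverMatrix_mul_shiftMatrix_mul_transpose_bdryMatrix hreg,
      Matrix.sub_mulVec, Matrix.smul_mulVec, ← mulVec_mulVec, hv, mulVec_smul, smul_smul,
      div_mul_eq_mul_div]
  rcases hμ with rfl | hμ
  · have hfix : U *ᵥ f = f :=
      hUf.trans (shiftMatrix_mul_transpose_bdryMatrix_mulVec hreg
        (adj_eq_of_adjMatrix_mulVec_eq_smul hreg hv))
    have hpow : ∀ n : ℕ, U ^ n *ᵥ f = f := by
      intro n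
      induction n with
      | zero => rw [pow_zero, one_mulVec]
      | succ n ih => rw [pow_succ, ← mulVec_mulVec, hfix, ih]
    exact hpow 12
  · refine pow_twelve_mulVec_eq_self_of_mulVec_mulVec_eq (x := 2 * μ / k) ?_ (by rw [hUf, hUg])
    have hk' : (k : ℝ) ≠ 0 := by positivity
    rcases hμ with rfl | rfl | rfl <;> field_simp <;> norm_num

theorem groverMatrix_pow_twelve_mul_transpose_bdryMatrix {k : ℕ}
    (hreg : G.IsRegularOfDegree k) (hk : 0 < k)
    (hspec : {μ : ℝ | ∃ v : V → ℝ, v ≠ 0 ∧ (G.adjMatrix ℝ).mulVec v = μ • v}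
      ⊆ {(k : ℝ), (k : ℝ) / 2, 0, -(k : ℝ) / 2}) :
    groverMatrix G ^ 12 * (bdryMatrix G)ᵀ = (bdryMatrix G)ᵀ := by
  suffices h : (groverMatrix G ^ 12 - 1) * (bdryMatrix G)ᵀ = 0 by
    rwa [Matrix.sub_mul, Matrix.one_mul, sub_eq_zero] at h
  refine (G.isHermitian_adjMatrix (R := ℝ)).eq_zero_of_mulVec_eigenvector fun μ v hv0 hv => ?_
  rw [← mulVec_mulVec, Matrix.sub_mulVec, one_mulVec,
    groverMatrix_pow_twelve_mulVec_transpose_bdryMatrix hreg hk hv (hspec ⟨v, hv0, hv⟩), sub_self]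

end Grover

theorem stmt_19_general {V : Type*} [Fintype V] [DecidableEq V] (G : SimpleGraph V)
    [DecidableRel G.Adj] (k : ℕ)
    (hreg : G.IsRegularOfDegree k)
    (hspec : {μ : ℝ | ∃ v : V → ℝ, v ≠ 0 ∧ (G.adjMatrix ℝ).mulVec v = μ • v}
      = {(k : ℝ), (k : ℝ) / 2, 0, -(k : ℝ) / 2}) :
    groverMatrix G ^ 12 = 1 := by
  rcases isEmpty_or_nonempty (arcSet G) with _ | ⟨⟨a⟩⟩
  · exact Subsingleton.elim _ _
  have hk : 0 < k := hreg.degree_eq a.1.1 ▸ (G.degree_pos_iff_exists_adj _).mpr ⟨_, a.2⟩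
  have hdeg : ∀ x, 0 < G.degree x := fun x => hreg.degree_eq x ▸ hk
  set T := groverMatrix G ^ 12 - 1
  have h₁ : T * (bdryMatrix G)ᵀ = 0 := by
    rw [Matrix.sub_mul, groverMatrix_pow_twelve_mul_transpose_bdryMatrix hreg hk hspec.subset,
      Matrix.one_mul, sub_self]
  have h₂ : T * shiftMatrix G * (bdryMatrix G)ᵀ = 0 := by
    rw [Matrix.mul_assoc, ← groverMatrix_mul_transpose_bdryMatrix hdeg, ← Matrix.mul_assoc,
      ((Commute.refl _).pow_left 12 |>.sub_left (Commute.one_left _)).eq, Matrix.mul_assoc, h₁,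
      Matrix.mul_zero]
  have hTU : T * (groverMatrix G ^ 2 - 1) = 0 := by
    rw [groverMatrix_sq, add_sub_cancel_right]
    simp only [Matrix.mul_smul, Matrix.mul_sub, ← Matrix.mul_assoc, h₁, h₂, Matrix.zero_mul,
      sub_zero, smul_zero]
  exact pow_eq_one_of_mul_pow_sub_one_eq_zero (transpose_groverMatrix_mul_self hdeg)
    (by norm_num : 2 ∣ 12) hTU

/-- A connected `k`-regular graph whose distinct adjacency eigenvalues are exactly
`{k, k/2, 0, -k/2}` has Grover walk evolution satisfying `U¹² = I`. -/
theorem stmt_19 {V : Type*} [Fintype V] [DecidableEq V] (G : SimpleGraph V)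
    [DecidableRel G.Adj] (k : ℕ)
    (hreg : G.IsRegularOfDegree k) (hconn : G.Connected)
    (hspec : {μ : ℝ | ∃ v : V → ℝ, v ≠ 0 ∧ (G.adjMatrix ℝ).mulVec v = μ • v}
      = {(k : ℝ), (k : ℝ) / 2, 0, -(k : ℝ) / 2}) :
    groverMatrix G ^ 12 = 1 :=
  stmt_19_general G k hreg hspec
end
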